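/- Let Ω ⊂ ℝ^N be a bounded domain, let a, c : Ω̄ → ℝ be continuous with a > 0 and c > 0 on Ω̄, and let ε > 0. Suppose u, v ∈ C²(Ω̄)∩C(Ω̄) both satisfy: u > 0 in Ω, u = 0 on ∂Ω, and −Δu(x) + c(x)·(u(x)+ε)^{−1}·|∇u(x)|² = a(x) for all x ∈ Ω, and likewise for v. Then u = v on Ω̄. -/

import Mathlib

/-!
Compare `u` and `v` through `w = log (u + ε) - log (v + ε)`, which vanishes on `∂Ω`. At an
interior maximum of `w` the logarithmic gradients of `u + ε` and `v + ε` coincide, so the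
gradient terms `c |∇u|² / (u + ε)²` and `c |∇v|² / (v + ε)²` cancel in `Δw ≤ 0`, which leaves
`a / (v + ε) ≤ a / (u + ε)`, i.e. `u ≤ v` there. Hence `w ≤ 0` on `Ω̄`, so `u ≤ v`, and `u = v`
by symmetry.
-/

open Set Filter

/-- The Laplacian of `u : ℝ^N → ℝ`: the sum of its second partial derivatives. -/
noncomputable def lap {N : ℕ} (u : EuclideanSpace ℝ (Fin N) → ℝ)
    (x : EuclideanSpace ℝ (Fin N)) : ℝ :=
  ∑ i : Fin N, fderiv ℝ (fun y => fderiv ℝ u y (EuclideanSpace.single i 1)) x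
    (EuclideanSpace.single i 1)

open Topology InnerProductSpace

theorem IsLocalMax.deriv_deriv_nonpos {g : ℝ → ℝ} {t : ℝ} (hmax : IsLocalMax g t)
    (hg : ContinuousAt g t) : deriv (deriv g) t ≤ 0 := by
  by_contra! hpos
  -- a positive second derivative would make `t` a local minimum too, so `g` is locally constant
  have hmin : IsLocalMin g t := isLocalMin_of_deriv_deriv_pos hpos hmax.deriv_eq_zero hg
  have hconst : g =ᶠ[𝓝 t] fun _ => g t := by
    filter_upwards [hmin, hmax] with s hs₁ hs₂ using le_antisymm hs₂ hs₁
  have hzero : deriv (deriv g) t = 0 := by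
    rw [hconst.deriv.deriv_eq]
    simp
  exact hpos.ne' hzero

section SecondDerivative

variable {E : Type*} [NormedAddCommGroup E] [NormedSpace ℝ E]

theorem ContDiffAt.differentiableAt_fderiv_apply {f : E → ℝ} {x : E} (hf : ContDiffAt ℝ 2 f x)
    (h : E) : DifferentiableAt ℝ (fun y => fderiv ℝ f y h) x :=
  ((hf.fderiv_right (m := 1) (by norm_num)).differentiableAt (by norm_num)).clm_apply
    (differentiableAt_const h)

theorem IsLocalMax.fderiv_fderiv_apply_nonpos {f : E → ℝ} {x : E} (hmax : IsLocalMax f x)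
    (hf : ContDiffAt ℝ 2 f x) (h : E) : fderiv ℝ (fun y => fderiv ℝ f y h) x h ≤ 0 := by
  have hline : ∀ t : ℝ, HasDerivAt (fun t : ℝ => x + t • h) h t := fun t => by
    simpa using ((hasDerivAt_id t).smul_const h).const_add x
  have hline0 : x + (0 : ℝ) • h = x := by simp
  have hlim : Tendsto (fun t : ℝ => x + t • h) (𝓝 0) (𝓝 x) :=
    (hline 0).continuousAt.tendsto.trans_eq (congrArg 𝓝 hline0)
  have hderiv : deriv (fun t : ℝ => f (x + t • h)) =ᶠ[𝓝 0]
      fun t : ℝ => fderiv ℝ f (x + t • h) h := by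
    filter_upwards [hlim.eventually (hf.eventually (by norm_num))] with t ht
    exact ((ht.differentiableAt (by norm_num)).hasFDerivAt.comp_hasDerivAt t (hline t)).deriv
  have hsecond : HasDerivAt (fun t : ℝ => fderiv ℝ f (x + t • h) h)
      (fderiv ℝ (fun y => fderiv ℝ f y h) x h) 0 :=
    (hf.differentiableAt_fderiv_apply h).hasFDerivAt.comp_hasDerivAt_of_eq 0 (hline 0) hline0.symm
  have hmax' : IsLocalMax (fun t : ℝ => f (x + t • h)) 0 :=
    IsMaxFilter.comp_tendsto (hline0.symm ▸ hmax) hlim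
  rw [← hsecond.deriv, ← hderiv.deriv_eq]
  exact hmax'.deriv_deriv_nonpos (hf.continuousAt.comp_of_eq (hline 0).continuousAt hline0)

theorem fderiv_fderiv_apply_sub {p q : E → ℝ} {x : E} (hp : ContDiffAt ℝ 2 p x)
    (hq : ContDiffAt ℝ 2 q x) (h : E) :
    fderiv ℝ (fun y => fderiv ℝ (fun z => p z - q z) y h) x h
      = fderiv ℝ (fun y => fderiv ℝ p y h) x h - fderiv ℝ (fun y => fderiv ℝ q y h) x h := by
  have hfirst : (fun y => fderiv ℝ (fun z => p z - q z) y h)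
      =ᶠ[𝓝 x] fun y => fderiv ℝ p y h - fderiv ℝ q y h := by
    filter_upwards [hp.eventually (by norm_num), hq.eventually (by norm_num)] with y hpy hqy
    rw [fderiv_fun_sub (hpy.differentiableAt (by norm_num)) (hqy.differentiableAt (by norm_num))]
    rfl
  rw [hfirst.fderiv_eq, fderiv_fun_sub (hp.differentiableAt_fderiv_apply h)
    (hq.differentiableAt_fderiv_apply h)]
  rfl

theorem fderiv_fderiv_apply_log {f : E → ℝ} {x : E} (hf : ContDiffAt ℝ 2 f x) (hx : f x ≠ 0)
    (h : E) :
    fderiv ℝ (fun y => fderiv ℝ (fun z => Real.log (f z)) y h) x h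
      = (f x)⁻¹ * fderiv ℝ (fun y => fderiv ℝ f y h) x h - (f x)⁻¹ ^ 2 * fderiv ℝ f x h ^ 2 := by
  have hfirst : (fun y => fderiv ℝ (fun z => Real.log (f z)) y h)
      =ᶠ[𝓝 x] fun y => (f y)⁻¹ * fderiv ℝ f y h := by
    filter_upwards [hf.eventually (by norm_num), hf.continuousAt.eventually_ne hx] with y hfy hy
    rw [((hfy.differentiableAt (by norm_num)).hasFDerivAt.log hy).fderiv]
    rfl
  have hinv : HasFDerivAt (fun y => (f y)⁻¹) (-((f x) ^ 2)⁻¹ • fderiv ℝ f x) x :=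
    (hasDerivAt_inv hx).comp_hasFDerivAt x (hf.differentiableAt (by norm_num)).hasFDerivAt
  rw [hfirst.fderiv_eq,
    (hinv.fun_mul (hf.differentiableAt_fderiv_apply h).hasFDerivAt).fderiv]
  simp only [add_apply, smul_apply, smul_eq_mul]
  ring

end SecondDerivative

section Laplacian

variable {N : ℕ}

theorem sum_sq_fderiv_single (f : EuclideanSpace ℝ (Fin N) → ℝ) (x : EuclideanSpace ℝ (Fin N)) :
    ∑ i : Fin N, fderiv ℝ f x (EuclideanSpace.single i 1) ^ 2 = ‖gradient f x‖ ^ 2 := by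
  simp only [EuclideanSpace.real_norm_sq_eq, ← toDual_symm_apply, gradient,
    EuclideanSpace.inner_single_right]
  simp

theorem gradient_add_const (f : EuclideanSpace ℝ (Fin N) → ℝ) (x : EuclideanSpace ℝ (Fin N))
    (c : ℝ) : gradient (fun y => f y + c) x = gradient f x := by
  simp only [gradient, fderiv_add_const]

theorem lap_add_const (f : EuclideanSpace ℝ (Fin N) → ℝ) (x : EuclideanSpace ℝ (Fin N))
    (c : ℝ) : lap (fun y => f y + c) x = lap f x := by
  simp only [lap, fderiv_add_const]

theorem lap_sub {p q : EuclideanSpace ℝ (Fin N) → ℝ} {x : EuclideanSpace ℝ (Fin N)}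
    (hp : ContDiffAt ℝ 2 p x) (hq : ContDiffAt ℝ 2 q x) :
    lap (fun y => p y - q y) x = lap p x - lap q x := by
  simp only [lap, fderiv_fderiv_apply_sub hp hq, Finset.sum_sub_distrib]

theorem lap_log {f : EuclideanSpace ℝ (Fin N) → ℝ} {x : EuclideanSpace ℝ (Fin N)}
    (hf : ContDiffAt ℝ 2 f x) (hx : f x ≠ 0) :
    lap (fun y => Real.log (f y)) x = (f x)⁻¹ * lap f x - (f x)⁻¹ ^ 2 * ‖gradient f x‖ ^ 2 := by
  simp only [lap, fderiv_fderiv_apply_log hf hx, Finset.sum_sub_distrib, ← Finset.mul_sum,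
    sum_sq_fderiv_single]

theorem IsLocalMax.lap_nonpos {f : EuclideanSpace ℝ (Fin N) → ℝ} {x : EuclideanSpace ℝ (Fin N)}
    (hmax : IsLocalMax f x) (hf : ContDiffAt ℝ 2 f x) : lap f x ≤ 0 :=
  Finset.sum_nonpos fun _ _ => hmax.fderiv_fderiv_apply_nonpos hf _

theorem le_of_isLocalMax_log_sub_log {U V : EuclideanSpace ℝ (Fin N) → ℝ}
    {x : EuclideanSpace ℝ (Fin N)} {a c : ℝ}
    (hU : ContDiffAt ℝ 2 U x) (hV : ContDiffAt ℝ 2 V x) (hUx : 0 < U x) (hVx : 0 < V x)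
    (ha : 0 < a) (hUeq : -lap U x + c * (U x)⁻¹ * ‖gradient U x‖ ^ 2 = a)
    (hVeq : -lap V x + c * (V x)⁻¹ * ‖gradient V x‖ ^ 2 = a)
    (hmax : IsLocalMax (fun y => Real.log (U y) - Real.log (V y)) x) : U x ≤ V x := by
  have hderiv : HasFDerivAt (fun y => Real.log (U y) - Real.log (V y))
      ((U x)⁻¹ • fderiv ℝ U x - (V x)⁻¹ • fderiv ℝ V x) x :=
    ((hU.differentiableAt (by norm_num)).hasFDerivAt.log hUx.ne').sub
      ((hV.differentiableAt (by norm_num)).hasFDerivAt.log hVx.ne')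
  have hgrad : (U x)⁻¹ • gradient U x = (V x)⁻¹ • gradient V x := by
    simpa [gradient] using
      congrArg (toDual ℝ _).symm (sub_eq_zero.mp (hmax.hasFDerivAt_eq_zero hderiv))
  have hgrad_sq : (U x)⁻¹ ^ 2 * ‖gradient U x‖ ^ 2 = (V x)⁻¹ ^ 2 * ‖gradient V x‖ ^ 2 := by
    have hnorm := congrArg (‖·‖) hgrad
    simp only [norm_smul, norm_inv, Real.norm_of_nonneg hUx.le, Real.norm_of_nonneg hVx.le] at hnorm
    rw [← mul_pow, ← mul_pow, hnorm]
  have hlap := hmax.lap_nonpos ((hU.log hUx.ne').sub (hV.log hVx.ne'))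
  rw [lap_sub (hU.log hUx.ne') (hV.log hVx.ne'), lap_log hU hUx.ne', lap_log hV hVx.ne'] at hlap
  have hinv : a * (V x)⁻¹ ≤ a * (U x)⁻¹ := by
    linear_combination hlap + (U x)⁻¹ * hUeq - (V x)⁻¹ * hVeq - (c - 1) * hgrad_sq
  exact (inv_le_inv₀ hVx hUx).mp (le_of_mul_le_mul_left hinv ha)

end Laplacian

section TruncatedProblem

variable {N : ℕ}

structure IsTruncatedSolution (Ω : Set (EuclideanSpace ℝ (Fin N)))
    (a c : EuclideanSpace ℝ (Fin N) → ℝ) (ε : ℝ) (u : EuclideanSpace ℝ (Fin N) → ℝ) : Prop where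
  contDiffOn : ContDiffOn ℝ 2 u (closure Ω)
  pos : ∀ x ∈ Ω, 0 < u x
  eq_zero_of_mem_frontier : ∀ x ∈ frontier Ω, u x = 0
  eq : ∀ x ∈ Ω, -lap u x + c x * (u x + ε)⁻¹ * ‖gradient u x‖ ^ 2 = a x

namespace IsTruncatedSolution

variable {Ω : Set (EuclideanSpace ℝ (Fin N))} {a c : EuclideanSpace ℝ (Fin N) → ℝ} {ε : ℝ}
  {u v : EuclideanSpace ℝ (Fin N) → ℝ}

theorem add_pos (hu : IsTruncatedSolution Ω a c ε u) (hε : 0 < ε) {x : EuclideanSpace ℝ (Fin N)}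
    (hx : x ∈ closure Ω) : 0 < u x + ε := by
  rcases (closure_eq_self_union_frontier Ω).subset hx with hx | hx
  · linarith [hu.pos x hx]
  · rwa [hu.eq_zero_of_mem_frontier x hx, zero_add]

theorem le_on_closure (hu : IsTruncatedSolution Ω a c ε u) (hv : IsTruncatedSolution Ω a c ε v)
    (hΩo : IsOpen Ω) (hΩb : Bornology.IsBounded Ω) (ha : ∀ x ∈ Ω, 0 < a x) (hε : 0 < ε) :
    ∀ x ∈ closure Ω, u x ≤ v x := by
  intro x hx
  set w := fun y => Real.log (u y + ε) - Real.log (v y + ε)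
  have hw : ContinuousOn w (closure Ω) :=
    ((hu.contDiffOn.continuousOn.add continuousOn_const).log fun _ hy => (hu.add_pos hε hy).ne').sub
      ((hv.contDiffOn.continuousOn.add continuousOn_const).log fun _ hy => (hv.add_pos hε hy).ne')
  obtain ⟨x₀, hx₀, hmax⟩ := hΩb.isCompact_closure.exists_isMaxOn ⟨x, hx⟩ hw
  suffices hw₀ : w x₀ ≤ 0 by
    have hlog : Real.log (u x + ε) ≤ Real.log (v x + ε) := sub_nonpos.mp ((hmax hx).trans hw₀)
    linarith [(Real.log_le_log_iff (hu.add_pos hε hx) (hv.add_pos hε hx)).mp hlog]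
  rcases (closure_eq_self_union_frontier Ω).subset hx₀ with hx₀_int | hx₀_front
  · have hnhds : closure Ω ∈ 𝓝 x₀ := mem_of_superset (hΩo.mem_nhds hx₀_int) subset_closure
    have hle : u x₀ + ε ≤ v x₀ + ε :=
      le_of_isLocalMax_log_sub_log (U := fun y => u y + ε) (V := fun y => v y + ε)
        ((hu.contDiffOn.contDiffAt hnhds).add contDiffAt_const)
        ((hv.contDiffOn.contDiffAt hnhds).add contDiffAt_const)
        (hu.add_pos hε hx₀) (hv.add_pos hε hx₀) (ha x₀ hx₀_int)
        (by rw [lap_add_const, gradient_add_const]; exact hu.eq x₀ hx₀_int)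
        (by rw [lap_add_const, gradient_add_const]; exact hv.eq x₀ hx₀_int)
        (hmax.localize.isLocalMax hnhds)
    exact sub_nonpos.mpr (Real.log_le_log (hu.add_pos hε hx₀) hle)
  · simp [w, hu.eq_zero_of_mem_frontier x₀ hx₀_front, hv.eq_zero_of_mem_frontier x₀ hx₀_front]

end IsTruncatedSolution

end TruncatedProblem

theorem uniqueness_truncated_problem_general
    {N : ℕ} (Ω : Set (EuclideanSpace ℝ (Fin N)))
    (hΩo : IsOpen Ω) (hΩb : Bornology.IsBounded Ω)
    (a c : EuclideanSpace ℝ (Fin N) → ℝ)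
    (hapos : ∀ x ∈ closure Ω, 0 < a x)
    (ε : ℝ) (hε : 0 < ε)
    (u v : EuclideanSpace ℝ (Fin N) → ℝ)
    (hureg : ContDiffOn ℝ 2 u (closure Ω))
    (hvreg : ContDiffOn ℝ 2 v (closure Ω))
    (hupos : ∀ x ∈ Ω, 0 < u x) (hvpos : ∀ x ∈ Ω, 0 < v x)
    (hubdry : ∀ x ∈ frontier Ω, u x = 0) (hvbdry : ∀ x ∈ frontier Ω, v x = 0)
    (hueq : ∀ x ∈ Ω, -lap u x + c x * (u x + ε)⁻¹ * ‖gradient u x‖ ^ 2 = a x)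
    (hveq : ∀ x ∈ Ω, -lap v x + c x * (v x + ε)⁻¹ * ‖gradient v x‖ ^ 2 = a x) :
    ∀ x ∈ closure Ω, u x = v x := by
  have hu : IsTruncatedSolution Ω a c ε u := ⟨hureg, hupos, hubdry, hueq⟩
  have hv : IsTruncatedSolution Ω a c ε v := ⟨hvreg, hvpos, hvbdry, hveq⟩
  have ha : ∀ x ∈ Ω, 0 < a x := fun x hx => hapos x (subset_closure hx)
  intro x hx
  exact le_antisymm (hu.le_on_closure hv hΩo hΩb ha hε x hx)
    (hv.le_on_closure hu hΩo hΩb ha hε x hx)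

/-- **Uniqueness for the truncated problem.** On a bounded domain `Ω`, with `a, c` continuous
and positive on `Ω̄` and `ε > 0`, any two solutions `u, v ∈ C²(Ω̄) ∩ C(Ω̄)` of
`-Δu + c(x) (u + ε)⁻¹ |∇u|² = a(x)` in `Ω`, `u > 0` in `Ω`, `u = 0` on `∂Ω`, coincide. -/
theorem uniqueness_truncated_problem
    {N : ℕ} (Ω : Set (EuclideanSpace ℝ (Fin N)))
    (hΩo : IsOpen Ω) (hΩconn : IsConnected Ω) (hΩb : Bornology.IsBounded Ω)
    (a c : EuclideanSpace ℝ (Fin N) → ℝ)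
    (hacont : ContinuousOn a (closure Ω)) (hccont : ContinuousOn c (closure Ω))
    (hapos : ∀ x ∈ closure Ω, 0 < a x) (hcpos : ∀ x ∈ closure Ω, 0 < c x)
    (ε : ℝ) (hε : 0 < ε)
    (u v : EuclideanSpace ℝ (Fin N) → ℝ)
    (hureg : ContDiffOn ℝ 2 u (closure Ω)) (hucont : ContinuousOn u (closure Ω))
    (hvreg : ContDiffOn ℝ 2 v (closure Ω)) (hvcont : ContinuousOn v (closure Ω))
    (hupos : ∀ x ∈ Ω, 0 < u x) (hvpos : ∀ x ∈ Ω, 0 < v x)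
    (hubdry : ∀ x ∈ frontier Ω, u x = 0) (hvbdry : ∀ x ∈ frontier Ω, v x = 0)
    (hueq : ∀ x ∈ Ω, -lap u x + c x * (u x + ε)⁻¹ * ‖gradient u x‖ ^ 2 = a x)
    (hveq : ∀ x ∈ Ω, -lap v x + c x * (v x + ε)⁻¹ * ‖gradient v x‖ ^ 2 = a x) :
    ∀ x ∈ closure Ω, u x = v x :=
  uniqueness_truncated_problem_general Ω hΩo hΩb a c hapos ε hε u v hureg hvreg hupos hvpos hubdry
    hvbdry hueq hveq
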